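/- Fix positive reals ν_a, ν_o, h_a, h_o, α_c, ε and θ ∈ ℝ with θ ≠ 0. For real t ≠ 0 define χ_j(t) = i·t·h_j²/ν_j, λ_j(t) = (χ_j(t) − √(χ_j(t))·√(χ_j(t)+4))/2 (principal complex square root, j ∈ {a,o}), and the convergence factor ξ(t) = |((1−θ) + ε·h_a·λ_o(t)/(h_o·λ_a(t))) / (ν_a·χ_a(t)/(α_c·h_a·λ_a(t)) − θ)|. Then ξ(t) tends to ξ₀ := (1/|θ|)·|1 − θ + ε·√(ν_a/ν_o)| as t → 0 with t ≠ 0. -/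

import Mathlib

open Filter Topology

/-- Principal complex square root. -/
noncomputable def csqrt (z : ℂ) : ℂ := z ^ ((1 : ℂ) / 2)

/-- `λ(χ) = (χ − √χ·√(χ+4))/2`. -/
noncomputable def lamM (χ : ℂ) : ℂ := (χ - csqrt χ * csqrt (χ + 4)) / 2

/-- `χ_j(t) = i·t·h_j²/ν_j`. -/
noncomputable def chi (h ν t : ℝ) : ℂ := Complex.I * t * (h : ℂ) ^ 2 / (ν : ℂ)

/-- The SWR convergence factor with linear friction
`ξ(t) = |((1−θ) + ε·h_a·λ_o/(h_o·λ_a)) / (ν_a·χ_a/(α_c·h_a·λ_a) − θ)|`. -/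
noncomputable def xi (νa νo ha ho αc ε θ : ℝ) (t : ℝ) : ℝ :=
  ‖((1 - (θ : ℂ)) + (ε : ℂ) * (ha : ℂ) * lamM (chi ho νo t)
      / ((ho : ℂ) * lamM (chi ha νa t)))
    / ((νa : ℂ) * chi ha νa t / ((αc : ℂ) * (ha : ℂ) * lamM (chi ha νa t)) - (θ : ℂ))‖

lemma csqrt_mul_self {z : ℂ} (hz : z ≠ 0) : csqrt z * csqrt z = z := by
  rw [csqrt, ← Complex.cpow_add _ _ hz]; norm_num

lemma csqrt_ne_zero {z : ℂ} (hz : z ≠ 0) : csqrt z ≠ 0 := by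
  intro h
  apply hz
  rw [← csqrt_mul_self hz, h, mul_zero]

lemma csqrt_real_mul {r : ℝ} (hr : 0 < r) {z : ℂ} (hz : z ≠ 0) :
    csqrt ((r : ℂ) * z) = (Real.sqrt r : ℂ) * csqrt z := by
  have hr' : (r : ℂ) ≠ 0 := Complex.ofReal_ne_zero.mpr hr.ne'
  rw [csqrt, csqrt, Complex.cpow_def_of_ne_zero (mul_ne_zero hr' hz),
    Complex.log_ofReal_mul hr hz, add_mul, Complex.exp_add,
    ← Complex.cpow_def_of_ne_zero hz]
  congr 1
  rw [show ((Real.log r : ℂ)) * (1/2) = ((Real.log r * (1/2) : ℝ) : ℂ) by push_cast; ring,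
    ← Complex.ofReal_exp]
  congr 1
  rw [Real.sqrt_eq_rpow, Real.rpow_def_of_pos hr]

lemma csqrt_four : csqrt 4 = 2 := by
  have h : ((4:ℝ) : ℂ) ^ ((((1:ℝ)/2) : ℝ) : ℂ) = (((4:ℝ) ^ ((1:ℝ)/2) : ℝ) : ℂ) :=
    (Complex.ofReal_cpow (by norm_num) _).symm
  have h2 : (4:ℝ) ^ ((1:ℝ)/2) = 2 := by
    rw [show (4:ℝ) = 2^(2:ℕ) by norm_num, ← Real.rpow_natCast 2 2,
      ← Real.rpow_mul (by norm_num)]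
    norm_num
  rw [csqrt, show ((1:ℂ)/2) = ((((1:ℝ)/2):ℝ):ℂ) by norm_num,
    show (4:ℂ) = ((4:ℝ):ℂ) by norm_num, h, h2]
  norm_num

lemma tendsto_csqrt_zero : Tendsto csqrt (𝓝 0) (𝓝 0) := by
  rw [tendsto_zero_iff_norm_tendsto_zero]
  have hb : ∀ z : ℂ, ‖csqrt z‖ ≤ ‖z‖ ^ ((1:ℝ)/2) := by
    intro z
    simpa [csqrt] using Complex.norm_cpow_le z ((1:ℂ)/2)
  refine squeeze_zero (fun z => norm_nonneg _) hb ?_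
  have habs : Tendsto (fun z : ℂ => ‖z‖) (𝓝 0) (𝓝 0) := by
    simpa using (continuous_norm.tendsto (0:ℂ))
  have h2 : Tendsto (fun x : ℝ => x ^ ((1:ℝ)/2)) (𝓝 0) (𝓝 0) := by
    simpa using (Real.continuousAt_rpow_const 0 ((1:ℝ)/2) (by norm_num)).tendsto
  exact h2.comp habs

lemma tendsto_csqrt_four : Tendsto (fun z : ℂ => csqrt (z + 4)) (𝓝 0) (𝓝 2) := by
  rw [← csqrt_four]
  have hadd : Tendsto (fun z : ℂ => z + 4) (𝓝 0) (𝓝 4) := by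
    simpa using ((continuous_add_right (4:ℂ)).tendsto 0)
  have h : ContinuousAt (· ^ ((1:ℂ)/2)) (4:ℂ) :=
    continuousAt_cpow_const (by simp [Complex.mem_slitPlane_iff])
  simpa [csqrt, Function.comp_def] using h.tendsto.comp hadd

/-- `g(χ) = (√χ − √(χ+4))/2`, so that `λ(χ) = √χ · g(χ)`. -/
noncomputable def gfun (χ : ℂ) : ℂ := (csqrt χ - csqrt (χ + 4)) / 2

lemma lamM_eq {χ : ℂ} (hχ : χ ≠ 0) : lamM χ = csqrt χ * gfun χ := by
  have h := csqrt_mul_self hχ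
  unfold lamM gfun
  field_simp
  linear_combination -h

lemma gfun_tendsto : Tendsto gfun (𝓝 0) (𝓝 (-1)) := by
  have h := (tendsto_csqrt_zero.sub tendsto_csqrt_four).div_const (2:ℂ)
  have : ((0:ℂ) - 2)/2 = -1 := by norm_num
  rw [this] at h
  exact h

/-- The convergence factor tends to `ξ₀ = (1/|θ|)·|1 − θ + ε·√(ν_a/ν_o)|`
as the frequency `t → 0`, `t ≠ 0`. -/
theorem xi_low_frequency_limit
    (νa νo ha ho αc ε θ : ℝ)
    (hνa : 0 < νa) (hνo : 0 < νo) (hha : 0 < ha) (hho : 0 < ho)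
    (hαc : 0 < αc) (hε : 0 < ε) (hθ : θ ≠ 0) :
    Tendsto (xi νa νo ha ho αc ε θ) (𝓝[≠] (0 : ℝ))
      (𝓝 ((1 / |θ|) * |1 - θ + ε * Real.sqrt (νa / νo)|)) := by
  set c : ℝ := ho^2*νa/(νo*ha^2) with hc_def
  have hc : 0 < c := by positivity
  have hνa' : (νa:ℂ) ≠ 0 := Complex.ofReal_ne_zero.mpr hνa.ne'
  have hνo' : (νo:ℂ) ≠ 0 := Complex.ofReal_ne_zero.mpr hνo.ne'
  have hha2' : (ha:ℂ) ≠ 0 := Complex.ofReal_ne_zero.mpr hha.ne'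
  have hho2' : (ho:ℂ) ≠ 0 := Complex.ofReal_ne_zero.mpr hho.ne'
  have hchio : ∀ t : ℝ, chi ho νo t = (c:ℂ) * chi ha νa t := by
    intro t
    simp only [chi, hc_def]
    push_cast
    field_simp
  -- limits of building blocks
  have hχa : Tendsto (fun t : ℝ => chi ha νa t) (𝓝[≠] 0) (𝓝 0) := by
    have hcont : Continuous fun t : ℝ => Complex.I * (t:ℂ) * (ha:ℂ)^2 / (νa:ℂ) := by
      fun_prop
    have h2 : Tendsto (fun t : ℝ => Complex.I * (t:ℂ) * (ha:ℂ)^2 / (νa:ℂ)) (𝓝[≠] 0)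
        (𝓝 (Complex.I * ((0:ℝ):ℂ) * (ha:ℂ)^2 / (νa:ℂ))) :=
      (hcont.tendsto 0).mono_left nhdsWithin_le_nhds
    simpa [chi] using h2
  have hχo : Tendsto (fun t : ℝ => chi ho νo t) (𝓝[≠] 0) (𝓝 0) := by
    have hcont : Continuous fun t : ℝ => Complex.I * (t:ℂ) * (ho:ℂ)^2 / (νo:ℂ) := by
      fun_prop
    have h2 : Tendsto (fun t : ℝ => Complex.I * (t:ℂ) * (ho:ℂ)^2 / (νo:ℂ)) (𝓝[≠] 0)
        (𝓝 (Complex.I * ((0:ℝ):ℂ) * (ho:ℂ)^2 / (νo:ℂ))) :=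
      (hcont.tendsto 0).mono_left nhdsWithin_le_nhds
    simpa [chi] using h2
  have hgA : Tendsto (fun t : ℝ => gfun (chi ha νa t)) (𝓝[≠] 0) (𝓝 (-1)) :=
    gfun_tendsto.comp hχa
  have hgO : Tendsto (fun t : ℝ => gfun (chi ho νo t)) (𝓝[≠] 0) (𝓝 (-1)) :=
    gfun_tendsto.comp hχo
  have hsA : Tendsto (fun t : ℝ => csqrt (chi ha νa t)) (𝓝[≠] 0) (𝓝 0) :=
    tendsto_csqrt_zero.comp hχa
  -- the simplified function
  set F : ℝ → ℂ := fun t =>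
    ((1 - (θ:ℂ)) + (ε:ℂ) * (ha:ℂ) * ((Real.sqrt c : ℝ) : ℂ) * gfun (chi ho νo t)
        / ((ho:ℂ) * gfun (chi ha νa t)))
      / ((νa:ℂ) * csqrt (chi ha νa t) / ((αc:ℂ) * (ha:ℂ) * gfun (chi ha νa t)) - (θ:ℂ))
    with hF_def
  have hho' : (ho:ℂ) ≠ 0 := Complex.ofReal_ne_zero.mpr hho.ne'
  have hha' : (ha:ℂ) ≠ 0 := Complex.ofReal_ne_zero.mpr hha.ne'
  have hαc' : (αc:ℂ) ≠ 0 := Complex.ofReal_ne_zero.mpr hαc.ne'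
  have hθ' : (θ:ℂ) ≠ 0 := Complex.ofReal_ne_zero.mpr hθ
  -- sqrt c in terms of sqrt (νa/νo)
  have hcs : Real.sqrt c = ho/ha * Real.sqrt (νa/νo) := by
    rw [show c = (ho/ha)^2 * (νa/νo) by rw [hc_def]; field_simp,
      Real.sqrt_mul (by positivity), Real.sqrt_sq (by positivity)]
  -- limit of the numerator of F
  have hnum : Tendsto
      (fun t : ℝ => (1 - (θ:ℂ)) + (ε:ℂ) * (ha:ℂ) * ((Real.sqrt c : ℝ) : ℂ)
          * gfun (chi ho νo t) / ((ho:ℂ) * gfun (chi ha νa t)))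
      (𝓝[≠] 0) (𝓝 ((1 - θ + ε * Real.sqrt (νa/νo) : ℝ) : ℂ)) := by
    have h1 : Tendsto
        (fun t : ℝ => (1 - (θ:ℂ)) + (ε:ℂ) * (ha:ℂ) * ((Real.sqrt c : ℝ) : ℂ)
            * gfun (chi ho νo t) / ((ho:ℂ) * gfun (chi ha νa t)))
        (𝓝[≠] 0)
        (𝓝 ((1 - (θ:ℂ)) + (ε:ℂ) * (ha:ℂ) * ((Real.sqrt c : ℝ) : ℂ) * (-1)
            / ((ho:ℂ) * (-1)))) := by
      exact tendsto_const_nhds.add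
        (((tendsto_const_nhds.mul hgO).div (tendsto_const_nhds.mul hgA)
          (by simp [hho'])))
    have heq : (1 - (θ:ℂ)) + (ε:ℂ) * (ha:ℂ) * ((Real.sqrt c : ℝ) : ℂ) * (-1)
        / ((ho:ℂ) * (-1)) = ((1 - θ + ε * Real.sqrt (νa/νo) : ℝ) : ℂ) := by
      have hsνo : ((Real.sqrt νo : ℝ) : ℂ) ≠ 0 :=
        Complex.ofReal_ne_zero.mpr (Real.sqrt_ne_zero'.mpr hνo)
      rw [hcs]
      push_cast
      field_simp [hha', hho', hsνo]
    rwa [heq] at h1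
  -- limit of the denominator of F
  have hden : Tendsto
      (fun t : ℝ => (νa:ℂ) * csqrt (chi ha νa t)
          / ((αc:ℂ) * (ha:ℂ) * gfun (chi ha νa t)) - (θ:ℂ))
      (𝓝[≠] 0) (𝓝 (-(θ:ℂ))) := by
    have h1 : Tendsto
        (fun t : ℝ => (νa:ℂ) * csqrt (chi ha νa t)
            / ((αc:ℂ) * (ha:ℂ) * gfun (chi ha νa t)) - (θ:ℂ))
        (𝓝[≠] 0)
        (𝓝 ((νa:ℂ) * 0 / ((αc:ℂ) * (ha:ℂ) * (-1)) - (θ:ℂ))) :=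
      ((tendsto_const_nhds.mul hsA).div
        ((tendsto_const_nhds.mul hgA)) (by simp [hαc', hha'])).sub tendsto_const_nhds
    simpa using h1
  have hF : Tendsto F (𝓝[≠] 0)
      (𝓝 (((1 - θ + ε * Real.sqrt (νa/νo) : ℝ) : ℂ) / (-(θ:ℂ)))) :=
    hnum.div hden (by simpa using hθ')
  -- eventual equality of xi and |F|
  have hev : ∀ᶠ t in 𝓝[≠] (0:ℝ), xi νa νo ha ho αc ε θ t = ‖F t‖ := by
    filter_upwards [self_mem_nhdsWithin,
      hgA.eventually_ne (show (-1:ℂ) ≠ 0 by norm_num)] with t ht hgt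
    have ht0 : t ≠ 0 := ht
    have ht' : (t:ℂ) ≠ 0 := Complex.ofReal_ne_zero.mpr ht0
    have hχa0 : chi ha νa t ≠ 0 := by
      simp [chi, div_eq_zero_iff, mul_eq_zero, Complex.I_ne_zero, ht',
        Complex.ofReal_ne_zero, hνa.ne', hha.ne']
    have hχo0 : chi ho νo t ≠ 0 := by
      simp [chi, div_eq_zero_iff, mul_eq_zero, Complex.I_ne_zero, ht',
        Complex.ofReal_ne_zero, hνo.ne', hho.ne']
    have hs : csqrt (chi ha νa t) ≠ 0 := csqrt_ne_zero hχa0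
    have hss : csqrt (chi ha νa t) * csqrt (chi ha νa t) = chi ha νa t :=
      csqrt_mul_self hχa0
    rw [xi]
    simp only [hF_def]
    apply congrArg
    rw [lamM_eq hχa0, lamM_eq hχo0, hchio t, csqrt_real_mul hc hχa0]
    set s := csqrt (chi ha νa t) with hs_def
    congr 1
    · field_simp [hs, hgt, hho']
    · rw [← hss]
      rw [← hss] at hgt
      field_simp [hs, hgt, hαc', hha']
  -- conclude
  have habsF : Tendsto (fun t => ‖F t‖) (𝓝[≠] 0)
      (𝓝 ‖(((1 - θ + ε * Real.sqrt (νa/νo) : ℝ) : ℂ) / (-(θ:ℂ)))‖) :=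
    (continuous_norm.tendsto _).comp hF
  have hval : ‖(((1 - θ + ε * Real.sqrt (νa/νo) : ℝ) : ℂ) / (-(θ:ℂ)))‖
      = (1 / |θ|) * |1 - θ + ε * Real.sqrt (νa/νo)| := by
    rw [norm_div, Complex.norm_real, norm_neg, Complex.norm_real, Real.norm_eq_abs, Real.norm_eq_abs]
    ring
  rw [hval] at habsF
  have hev' : (xi νa νo ha ho αc ε θ) =ᶠ[𝓝[≠] (0:ℝ)] fun t => ‖F t‖ := hev
  exact habsF.congr' hev'.symm
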